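/- arXiv:2602.22554 — 2 statements merged into one kernel-verified Lean document; each statement's English description precedes it below -/
import Mathlib

section
/- Let X_low be a real N_h×d matrix, X_safe a real N_s×d matrix, D a real N_h×m matrix, γ ≥ 0, λ > 0 real numbers, and r a natural number. Define J(Δ) = ‖X_low Δ − D‖_F² + γ‖X_safe Δ‖_F² + λ‖Δ‖_F², Q = X_lowᵀ X_low + γ X_safeᵀ X_safe + λ I, and M = Q⁻¹ X_lowᵀ D, and let R be an invertible real d×d matrix with Rᵀ R = Q. Then Δ* ∈ ℝ^{d×m} minimizes J over the set {Δ ∈ ℝ^{d×m} : rank(Δ) ≤ r} if and only if R Δ* minimizes the map B ↦ ‖B − R M‖_F² over the set {B ∈ ℝ^{d×m} : rank(B) ≤ r}. -/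
open Matrix

/-- The objective `J(Δ) = ‖Xlow Δ − D‖_F² + γ‖Xsafe Δ‖_F² + lam‖Δ‖_F²`,
where `‖A‖_F² = Tr(Aᵀ A)`. -/
noncomputable def J {Nh Ns d m : ℕ} (Xlow : Matrix (Fin Nh) (Fin d) ℝ)
    (Xsafe : Matrix (Fin Ns) (Fin d) ℝ) (D : Matrix (Fin Nh) (Fin m) ℝ)
    (γ lam : ℝ) (Δ : Matrix (Fin d) (Fin m) ℝ) : ℝ :=
  Matrix.trace ((Xlow * Δ - D)ᵀ * (Xlow * Δ - D))
    + γ * Matrix.trace ((Xsafe * Δ)ᵀ * (Xsafe * Δ))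
    + lam * Matrix.trace (Δᵀ * Δ)

/-- `Q = Xlowᵀ Xlow + γ Xsafeᵀ Xsafe + lam I`. -/
noncomputable def Qmat {Nh Ns d : ℕ} (Xlow : Matrix (Fin Nh) (Fin d) ℝ)
    (Xsafe : Matrix (Fin Ns) (Fin d) ℝ) (γ lam : ℝ) : Matrix (Fin d) (Fin d) ℝ :=
  Xlowᵀ * Xlow + γ • (Xsafeᵀ * Xsafe) + lam • (1 : Matrix (Fin d) (Fin d) ℝ)

/-- `M = Q⁻¹ Xlowᵀ D`. -/
noncomputable def Mmat {Nh Ns d m : ℕ} (Xlow : Matrix (Fin Nh) (Fin d) ℝ)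
    (Xsafe : Matrix (Fin Ns) (Fin d) ℝ) (D : Matrix (Fin Nh) (Fin m) ℝ)
    (γ lam : ℝ) : Matrix (Fin d) (Fin m) ℝ :=
  (Qmat Xlow Xsafe γ lam)⁻¹ * Xlowᵀ * D

/-- Expansion of the objective `J` in terms of `Q`. -/
lemma J_expand {Nh Ns d m : ℕ}
    (Xlow : Matrix (Fin Nh) (Fin d) ℝ) (Xsafe : Matrix (Fin Ns) (Fin d) ℝ)
    (D : Matrix (Fin Nh) (Fin m) ℝ) (γ lam : ℝ)
    (Δ : Matrix (Fin d) (Fin m) ℝ) :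
    _root_.J Xlow Xsafe D γ lam Δ
    = trace (Δᵀ * (Qmat Xlow Xsafe γ lam * Δ)) - trace (Δᵀ * (Xlowᵀ * D))
      - trace ((Xlowᵀ * D)ᵀ * Δ) + trace (Dᵀ * D) := by
  unfold _root_.J Qmat
  simp only [transpose_sub, transpose_mul, transpose_transpose, Matrix.sub_mul, Matrix.mul_sub,
    Matrix.add_mul, Matrix.mul_add, Matrix.one_mul, Matrix.smul_mul, Matrix.mul_smul,
    trace_sub, trace_add, trace_smul, Matrix.mul_assoc, Matrix.mul_one, smul_eq_mul]
  ring

/-- `Δ*` minimizes `J` over `{Δ : rank Δ ≤ r}` iff `R Δ*` minimizes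
`B ↦ ‖B − R M‖_F²` over `{B : rank B ≤ r}`. -/
theorem stmt_6 {Nh Ns d m : ℕ}
    (Xlow : Matrix (Fin Nh) (Fin d) ℝ) (Xsafe : Matrix (Fin Ns) (Fin d) ℝ)
    (D : Matrix (Fin Nh) (Fin m) ℝ) (γ lam : ℝ) (hγ : 0 ≤ γ) (hlam : 0 < lam)
    (r : ℕ) (R : Matrix (Fin d) (Fin d) ℝ) (hR : IsUnit R)
    (hRQ : Rᵀ * R = Qmat Xlow Xsafe γ lam)
    (Δs : Matrix (Fin d) (Fin m) ℝ) :
    (Δs.rank ≤ r ∧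
        ∀ Δ : Matrix (Fin d) (Fin m) ℝ, Δ.rank ≤ r →
          J Xlow Xsafe D γ lam Δs ≤ J Xlow Xsafe D γ lam Δ) ↔
    ((R * Δs).rank ≤ r ∧
        ∀ B : Matrix (Fin d) (Fin m) ℝ, B.rank ≤ r →
          Matrix.trace ((R * Δs - R * Mmat Xlow Xsafe D γ lam)ᵀ
              * (R * Δs - R * Mmat Xlow Xsafe D γ lam))
            ≤ Matrix.trace ((B - R * Mmat Xlow Xsafe D γ lam)ᵀ
              * (B - R * Mmat Xlow Xsafe D γ lam))) := by
  set Q := Qmat Xlow Xsafe γ lam with hQdef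
  set M := Mmat Xlow Xsafe D γ lam with hMdef
  have hRdet : IsUnit R.det := (Matrix.isUnit_iff_isUnit_det R).mp hR
  have hQdet : IsUnit Q.det := by
    rw [← hRQ, det_mul, det_transpose]
    exact hRdet.mul hRdet
  have hQM : Q * M = Xlowᵀ * D := by
    rw [hMdef, hQdef]
    unfold Mmat
    rw [← hQdef, ← Matrix.mul_assoc, ← Matrix.mul_assoc, Q.mul_nonsing_inv hQdet,
      Matrix.one_mul]
  have hQsym : Qᵀ = Q := by
    rw [hQdef]
    unfold Qmat
    simp [transpose_add, transpose_mul, transpose_smul]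
  -- key matrix identities
  have e1 : ∀ A B : Matrix (Fin d) (Fin m) ℝ, (R * A)ᵀ * (R * B) = Aᵀ * (Q * B) := by
    intro A B
    rw [transpose_mul, Matrix.mul_assoc, ← Matrix.mul_assoc Rᵀ, hRQ]
  have e2 : ∀ A : Matrix (Fin d) (Fin m) ℝ, Mᵀ * (Q * A) = (Xlowᵀ * D)ᵀ * A := by
    intro A
    rw [← Matrix.mul_assoc, ← hQsym, ← transpose_mul, hQM]
  -- the key identity: J Δ = ‖RΔ - RM‖² + c
  have key : ∀ Δ : Matrix (Fin d) (Fin m) ℝ,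
      J Xlow Xsafe D γ lam Δ
      = trace ((R * Δ - R * M)ᵀ * (R * Δ - R * M))
        + (trace (Dᵀ * D) - trace (Mᵀ * (Xlowᵀ * D))) := by
    intro Δ
    have hf : trace ((R * Δ - R * M)ᵀ * (R * Δ - R * M))
        = trace (Δᵀ * (Q * Δ)) - trace (Δᵀ * (Xlowᵀ * D))
          - trace ((Xlowᵀ * D)ᵀ * Δ) + trace (Mᵀ * (Xlowᵀ * D)) := by
      simp only [transpose_sub, Matrix.sub_mul, Matrix.mul_sub, trace_sub, e1, hQM, e2]
      ring
    rw [J_expand, hf, ← hQdef]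
    ring
  have hrank : ∀ A : Matrix (Fin d) (Fin m) ℝ, (R * A).rank = A.rank := fun A =>
    rank_mul_eq_right_of_isUnit_det R A hRdet
  constructor
  · rintro ⟨h1, h2⟩
    refine ⟨by rwa [hrank], fun B hB => ?_⟩
    have hΔ : (R⁻¹ * B).rank ≤ r := by
      rw [rank_mul_eq_right_of_isUnit_det R⁻¹ B (R.isUnit_nonsing_inv_det hRdet)]
      exact hB
    have := h2 (R⁻¹ * B) hΔ
    rw [key, key, Matrix.mul_nonsing_inv_cancel_left R B hRdet] at this
    linarith
  · rintro ⟨h1, h2⟩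
    refine ⟨by rwa [hrank] at h1, fun Δ hΔ => ?_⟩
    have := h2 (R * Δ) (by rwa [hrank])
    rw [key, key]
    linarith
end

section
/- (Theorem 1, Low-Rank Safety Alignment.) Let X_low be a real N_h×d matrix, X_safe a real N_s×d matrix, D a real N_h×m matrix, γ ≥ 0, λ > 0 real numbers, and r a natural number. Define J(Δ) = ‖X_low Δ − D‖_F² + γ‖X_safe Δ‖_F² + λ‖Δ‖_F², Q = X_lowᵀ X_low + γ X_safeᵀ X_safe + λ I, and M = Q⁻¹ X_lowᵀ D; let R be an invertible real d×d matrix with Rᵀ R = Q. Suppose R M = U Σ Vᵀ where U ∈ ℝ^{d×d} and V ∈ ℝ^{m×m} are orthogonal matrices and Σ ∈ ℝ^{d×m} satisfies Σ_{ij} = 0 for i ≠ j and Σ_{11} ≥ Σ_{22} ≥ … ≥ 0 on the diagonal. Let Σ_r be obtained from Σ by setting all diagonal entries beyond the first r to zero. Then Δ* = R⁻¹ U Σ_r Vᵀ satisfies rank(Δ*) ≤ r and J(Δ*) ≤ J(Δ) for every Δ ∈ ℝ^{d×m} with rank(Δ) ≤ r. -/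
/-!
Since `Rᵀ R = Q` and `Q M = Xlowᵀ D`, completing the square gives
`J Δ = ‖R Δ - R M‖_F² + c` with `c` independent of `Δ`. The map `Δ ↦ Uᵀ R Δ V` preserves rank
and turns `‖R Δ - R M‖_F` into `‖Z - Σ‖_F`, so it remains to show the Eckart–Young inequality
`‖Σ_r - Σ‖_F² ≤ ‖Z - Σ‖_F²` for `rank Z ≤ r`. Project the columns `σ_j e_j` of `Σ` onto the
column space `K` of `Z`: the error is at least `∑ σ_j² (1 - p_j)` with `p_j = ‖P_K e_j‖² ∈ [0, 1]`
and, by Bessel's inequality, `∑ p_j ≤ dim K ≤ r`. As the `σ_j²` decrease, no such weights `p`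
beat `p_j = 1` on the first `r` indices, which gives `∑_{j ≥ r} σ_j² = ‖Σ_r - Σ‖_F²`.
-/

open Matrix Finset Module
open scoped RealInnerProductSpace

theorem Fin.sum_mul_le_sum_filter_lt {n : ℕ} (r : ℕ) {f p : Fin n → ℝ} (hf : Antitone f)
    (hf0 : 0 ≤ f) (hp0 : 0 ≤ p) (hp1 : p ≤ 1) (hp : ∑ i, p i ≤ r) :
    ∑ i, f i * p i ≤ ∑ i : Fin n with i.val < r, f i := by
  obtain hnr | hrn := le_or_gt n r
  · rw [filter_true_of_mem fun i _ => i.2.trans_le hnr]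
    exact sum_le_sum fun i _ => mul_le_of_le_one_right (hf0 i) (hp1 i)
  set t := f ⟨r, hrn⟩
  have hpt : ∀ i, (f i - t) * p i ≤ if (i : ℕ) < r then f i - t else 0 := fun i => by
    split_ifs with hi
    · exact mul_le_of_le_one_right (sub_nonneg.2 (hf (Fin.le_def.2 hi.le))) (hp1 i)
    · exact mul_nonpos_of_nonpos_of_nonneg (sub_nonpos.2 (hf (Fin.le_def.2 (not_lt.1 hi))))
        (hp0 i)
  have hcard : #{i : Fin n | i.val < r} = r := by rw [Fin.card_filter_val_lt]; omega
  calc ∑ i, f i * p i = ∑ i, (f i - t) * p i + t * ∑ i, p i := by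
        rw [mul_sum, ← sum_add_distrib]; exact sum_congr rfl fun i _ => by ring
    _ ≤ ∑ i : Fin n with i.val < r, (f i - t) + t * r := by
        gcongr
        · rw [sum_filter]; exact sum_le_sum fun i _ => hpt i
        · exact hf0 _
    _ = ∑ i : Fin n with i.val < r, f i := by
        rw [sum_sub_distrib, Finset.sum_const, hcard, nsmul_eq_mul]; ring

section Projection

variable {E : Type*} [NormedAddCommGroup E] [InnerProductSpace ℝ E]

theorem Orthonormal.sum_norm_sq_starProjection_le_finrank {ι : Type*} [Fintype ι] {e : ι → E}
    (he : Orthonormal ℝ e) (K : Submodule ℝ E) [FiniteDimensional ℝ K] :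
    ∑ i, ‖K.starProjection (e i)‖ ^ 2 ≤ finrank ℝ K := by
  set b := stdOrthonormalBasis ℝ K
  have hParseval : ∀ x : E, ‖K.starProjection x‖ ^ 2 = ∑ l, ⟪x, b l⟫ ^ 2 := fun x => by
    rw [K.starProjection_apply, ← Submodule.coe_norm, ← b.sum_sq_inner_left]
    simp
  calc ∑ i, ‖K.starProjection (e i)‖ ^ 2 = ∑ l, ∑ i, ⟪e i, b l⟫ ^ 2 := by
        simp_rw [hParseval]; exact Finset.sum_comm
    _ ≤ ∑ _l, 1 := sum_le_sum fun l _ => by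
        simpa [Submodule.norm_coe, b.norm_eq_one] using
          he.sum_inner_products_le (s := univ) (b l : E)
    _ = finrank ℝ K := by simp

theorem Submodule.norm_sq_sub_norm_sq_starProjection_le (K : Submodule ℝ E)
    [K.HasOrthogonalProjection] {z : E} (hz : z ∈ K) (x : E) :
    ‖x‖ ^ 2 - ‖K.starProjection x‖ ^ 2 ≤ ‖x - z‖ ^ 2 := by
  have hmin : ‖x - K.starProjection x‖ ≤ ‖x - z‖ := by
    rw [K.starProjection_minimal]
    exact ciInf_le ⟨0, by rintro _ ⟨w, rfl⟩; positivity⟩ (⟨z, hz⟩ : K)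
  have hpyth := K.norm_sq_eq_add_norm_sq_starProjection x
  rw [K.starProjection_orthogonal_val] at hpyth
  nlinarith [norm_nonneg (x - K.starProjection x)]

theorem Orthonormal.sum_sq_le_sum_norm_sq_sub_smul {n r : ℕ} {e : Fin n → E}
    (he : Orthonormal ℝ e) {σ : Fin n → ℝ} (hσ : Antitone fun i => σ i ^ 2)
    (K : Submodule ℝ E) [FiniteDimensional ℝ K] (hK : finrank ℝ K ≤ r) {z : Fin n → E}
    (hz : ∀ i, z i ∈ K) :
    ∑ i : Fin n with r ≤ i.val, σ i ^ 2 ≤ ∑ i, ‖z i - σ i • e i‖ ^ 2 := by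
  set p := fun i => ‖K.starProjection (e i)‖ ^ 2
  have hp1 : p ≤ 1 := fun i => by
    simpa [p, he.1 i] using
      pow_le_pow_left₀ (norm_nonneg _) (K.norm_starProjection_apply_le (e i)) 2
  have hpoint : ∀ i, σ i ^ 2 - σ i ^ 2 * p i ≤ ‖z i - σ i • e i‖ ^ 2 := fun i => by
    have := K.norm_sq_sub_norm_sq_starProjection_le (hz i) (σ i • e i)
    rw [norm_sub_rev]
    simpa [p, norm_smul, mul_pow, he.1 i] using this
  have hcomb := Fin.sum_mul_le_sum_filter_lt r hσ (fun i => sq_nonneg _) (fun i => sq_nonneg _) hp1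
    ((he.sum_norm_sq_starProjection_le_finrank K).trans (by exact_mod_cast hK))
  calc ∑ i : Fin n with r ≤ i.val, σ i ^ 2
        = ∑ i, σ i ^ 2 - ∑ i : Fin n with i.val < r, σ i ^ 2 := by
        rw [← sum_filter_not_add_sum_filter univ (fun i : Fin n => (i : ℕ) < r)]
        simp
    _ ≤ ∑ i, (σ i ^ 2 - σ i ^ 2 * p i) := by rw [sum_sub_distrib]; linarith
    _ ≤ ∑ i, ‖z i - σ i • e i‖ ^ 2 := sum_le_sum fun i _ => hpoint i

end Projection

theorem Matrix.trace_transpose_mul_self_eq_sum_norm_sq {m n : Type*} [Fintype m] [Fintype n]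
    (A : Matrix m n ℝ) : trace (Aᵀ * A) = ∑ j, ‖WithLp.toLp 2 (A.col j)‖ ^ 2 := by
  simp_rw [EuclideanSpace.real_norm_sq_eq]
  simp [trace, mul_apply, sq]

theorem Matrix.finrank_span_toLp_col {m n : Type*} [Fintype n] (A : Matrix m n ℝ) :
    finrank ℝ (Submodule.span ℝ (Set.range fun j => WithLp.toLp 2 (A.col j))) = A.rank := by
  rw [A.rank_eq_finrank_span_cols,
    ← LinearEquiv.finrank_map_eq (WithLp.linearEquiv 2 ℝ (m → ℝ)), Submodule.map_span,
    ← Set.range_comp]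
  rfl

theorem Matrix.toLp_col_eq_smul_single {d m : ℕ} (hmd : m ≤ d) {A : Matrix (Fin d) (Fin m) ℝ}
    (hA : ∀ (i : Fin d) (j : Fin m), (i : ℕ) ≠ j → A i j = 0) (j : Fin m) :
    WithLp.toLp 2 (A.col j) =
      A (Fin.castLE hmd j) j • EuclideanSpace.single (Fin.castLE hmd j) 1 := by
  ext i
  by_cases hi : i = Fin.castLE hmd j
  · subst hi; simp
  · simp [hi, hA i j (fun h => hi (Fin.ext h))]

theorem Matrix.trace_transpose_mul_sub_self {m n R : Type*} [Fintype m] [Fintype n] [CommRing R]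
    (A B : Matrix m n R) :
    trace ((A - B)ᵀ * (A - B)) = trace (Aᵀ * A) - 2 * trace (Aᵀ * B) + trace (Bᵀ * B) := by
  have hsymm : trace (Bᵀ * A) = trace (Aᵀ * B) := by
    rw [← trace_transpose, transpose_mul, transpose_transpose]
  simp only [transpose_sub, Matrix.sub_mul, Matrix.mul_sub, trace_sub, hsymm]
  ring

theorem Matrix.trace_transpose_mul_self_mul_mul_transpose {k l m n R : Type*} [Fintype k]
    [Fintype l] [Fintype m] [Fintype n] [DecidableEq m] [DecidableEq n] [CommRing R]
    {U : Matrix k m R} {V : Matrix l n R}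
    (hU : Uᵀ * U = 1) (hV : Vᵀ * V = 1) (A : Matrix m n R) :
    trace ((U * A * Vᵀ)ᵀ * (U * A * Vᵀ)) = trace (Aᵀ * A) := by
  have hconj : (U * A * Vᵀ)ᵀ * (U * A * Vᵀ) = V * (Aᵀ * A) * Vᵀ := by
    simp only [transpose_mul, transpose_transpose, Matrix.mul_assoc]
    rw [← Matrix.mul_assoc Uᵀ U, hU, Matrix.one_mul]
  rw [hconj, trace_mul_cycle, hV, Matrix.one_mul]

theorem Matrix.rank_le_of_forall_le_eq_zero {d r : ℕ} {n K : Type*} [Fintype n] [Field K]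
    {A : Matrix (Fin d) n K} (h : ∀ (i : Fin d) j, r ≤ (i : ℕ) → A i j = 0) : A.rank ≤ r := by
  classical
  have hA : A = diagonal (fun i : Fin d => if (i : ℕ) < r then (1 : K) else 0) * A := by
    ext i j
    by_cases hi : (i : ℕ) < r
    · simp [diagonal_mul, hi]
    · simp [diagonal_mul, hi, h i j (not_lt.1 hi)]
  calc A.rank ≤ (diagonal fun i : Fin d => if (i : ℕ) < r then (1 : K) else 0).rank := by
        rw [hA]; exact rank_mul_le_left _ _
    _ = #{i : Fin d | i.val < r} := by rw [rank_diagonal, Fintype.card_subtype]; simp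
    _ ≤ r := by rw [Fin.card_filter_val_lt]; exact min_le_right _ _

section EckartYoung

variable {d m r : ℕ} {S Sr Z : Matrix (Fin d) (Fin m) ℝ}

theorem trace_sub_truncation_le_of_width_le (hmd : m ≤ d)
    (hSdiag : ∀ (i : Fin d) (j : Fin m), (i : ℕ) ≠ (j : ℕ) → S i j = 0)
    (hSnonneg : ∀ (i : Fin d) (j : Fin m), (i : ℕ) = (j : ℕ) → 0 ≤ S i j)
    (hSmono : ∀ (i : Fin d) (j : Fin m) (i' : Fin d) (j' : Fin m),
      (i : ℕ) = (j : ℕ) → (i' : ℕ) = (j' : ℕ) → (i : ℕ) ≤ (i' : ℕ) → S i' j' ≤ S i j)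
    (hSr : ∀ (i : Fin d) (j : Fin m), Sr i j = if (i : ℕ) < r then S i j else 0)
    (hZ : Z.rank ≤ r) :
    trace ((Sr - S)ᵀ * (Sr - S)) ≤ trace ((Z - S)ᵀ * (Z - S)) := by
  set ι := Fin.castLE hmd
  set e : Fin m → EuclideanSpace ℝ (Fin d) := fun j => EuclideanSpace.single (ι j) 1
  have he : Orthonormal ℝ e :=
    EuclideanSpace.orthonormal_single.comp _ (Fin.castLE_injective hmd)
  have hσ : Antitone fun j => S (ι j) j ^ 2 := fun j j' h =>
    pow_le_pow_left₀ (hSnonneg _ _ rfl) (hSmono _ _ _ _ rfl rfl h) 2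
  have hdiff : ∀ (i : Fin d) (j : Fin m), (i : ℕ) ≠ j → (Sr - S) i j = 0 := fun i j h => by
    simp [hSr, hSdiag i j h]
  set K := Submodule.span ℝ (Set.range fun j => WithLp.toLp 2 (Z.col j))
  calc trace ((Sr - S)ᵀ * (Sr - S)) = ∑ j : Fin m with r ≤ j.val, S (ι j) j ^ 2 := by
        rw [trace_transpose_mul_self_eq_sum_norm_sq, sum_filter]
        refine sum_congr rfl fun j _ => ?_
        rw [toLp_col_eq_smul_single hmd hdiff, norm_smul, he.1 j, Matrix.sub_apply, hSr,
          Real.norm_eq_abs, mul_one, sq_abs, Fin.val_castLE]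
        by_cases hj : (j : ℕ) < r
        · simp [hj]
        · simp [hj, not_lt.1 hj, ι]
    _ ≤ ∑ j, ‖WithLp.toLp 2 (Z.col j) - S (ι j) j • e j‖ ^ 2 :=
        he.sum_sq_le_sum_norm_sq_sub_smul hσ K (Z.finrank_span_toLp_col.trans_le hZ)
          fun j => Submodule.subset_span ⟨j, rfl⟩
    _ = trace ((Z - S)ᵀ * (Z - S)) := by
        rw [trace_transpose_mul_self_eq_sum_norm_sq]
        refine sum_congr rfl fun j _ => ?_
        rw [← toLp_col_eq_smul_single hmd hSdiag]
        rfl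

theorem trace_sub_truncation_le
    (hSdiag : ∀ (i : Fin d) (j : Fin m), (i : ℕ) ≠ (j : ℕ) → S i j = 0)
    (hSnonneg : ∀ (i : Fin d) (j : Fin m), (i : ℕ) = (j : ℕ) → 0 ≤ S i j)
    (hSmono : ∀ (i : Fin d) (j : Fin m) (i' : Fin d) (j' : Fin m),
      (i : ℕ) = (j : ℕ) → (i' : ℕ) = (j' : ℕ) → (i : ℕ) ≤ (i' : ℕ) → S i' j' ≤ S i j)
    (hSr : ∀ (i : Fin d) (j : Fin m), Sr i j = if (i : ℕ) < r then S i j else 0)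
    (hZ : Z.rank ≤ r) :
    trace ((Sr - S)ᵀ * (Sr - S)) ≤ trace ((Z - S)ᵀ * (Z - S)) := by
  rcases le_total m d with hmd | hdm
  · exact trace_sub_truncation_le_of_width_le hmd hSdiag hSnonneg hSmono hSr hZ
  -- on a diagonal matrix, truncating the rows is the same as truncating the columns
  have hSrT : ∀ (j : Fin m) (i : Fin d), Srᵀ j i = if (j : ℕ) < r then Sᵀ j i else 0 :=
    fun j i => by
      by_cases hij : (i : ℕ) = j
      · simp [hSr, hij]
      · simp [hSr, hSdiag i j hij]
  have hT := trace_sub_truncation_le_of_width_le hdm (S := Sᵀ) (Sr := Srᵀ) (Z := Zᵀ)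
    (fun j i h => hSdiag i j (Ne.symm h)) (fun j i h => hSnonneg i j h.symm)
    (fun j i j' i' h h' hle => hSmono i j i' j' h.symm h'.symm (h ▸ h' ▸ hle)) hSrT
    (by rwa [rank_transpose])
  rwa [← transpose_sub, ← transpose_sub, transpose_transpose, transpose_transpose,
    trace_mul_comm, trace_mul_comm (Z - S)] at hT

end EckartYoung

section Objective

variable {Nh Ns d m : ℕ} (Xlow : Matrix (Fin Nh) (Fin d) ℝ) (Xsafe : Matrix (Fin Ns) (Fin d) ℝ)
  (D : Matrix (Fin Nh) (Fin m) ℝ) (γ lam : ℝ)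

theorem J_eq_trace_Qmat (Δ : Matrix (Fin d) (Fin m) ℝ) :
    J Xlow Xsafe D γ lam Δ = trace (Δᵀ * (Qmat Xlow Xsafe γ lam * Δ))
      - 2 * trace (Δᵀ * (Xlowᵀ * D)) + trace (Dᵀ * D) := by
  simp only [_root_.J, Qmat, trace_transpose_mul_sub_self, Matrix.add_mul, Matrix.smul_mul,
    Matrix.one_mul, Matrix.mul_add, Matrix.mul_smul, trace_add, trace_smul, transpose_mul,
    Matrix.mul_assoc, smul_eq_mul]
  ring

theorem J_eq_trace_sub_add {R : Matrix (Fin d) (Fin d) ℝ} {M : Matrix (Fin d) (Fin m) ℝ}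
    (hRQ : Rᵀ * R = Qmat Xlow Xsafe γ lam) (hM : Qmat Xlow Xsafe γ lam * M = Xlowᵀ * D)
    (Δ : Matrix (Fin d) (Fin m) ℝ) :
    J Xlow Xsafe D γ lam Δ = trace ((R * Δ - R * M)ᵀ * (R * Δ - R * M))
      + (trace (Dᵀ * D) - trace ((R * M)ᵀ * (R * M))) := by
  rw [J_eq_trace_Qmat, trace_transpose_mul_sub_self, ← hM, ← hRQ]
  simp only [transpose_mul, Matrix.mul_assoc]
  ring

theorem Qmat_mul_Mmat (hQ : IsUnit (Qmat Xlow Xsafe γ lam).det) :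
    Qmat Xlow Xsafe γ lam * Mmat Xlow Xsafe D γ lam = Xlowᵀ * D := by
  rw [Mmat, Matrix.mul_assoc, mul_nonsing_inv_cancel_left _ _ hQ]

end Objective

theorem stmt_7_general {Nh Ns d m : ℕ}
    (Xlow : Matrix (Fin Nh) (Fin d) ℝ) (Xsafe : Matrix (Fin Ns) (Fin d) ℝ)
    (D : Matrix (Fin Nh) (Fin m) ℝ) (γ lam : ℝ)
    (r : ℕ) (R : Matrix (Fin d) (Fin d) ℝ) (hR : IsUnit R)
    (hRQ : Rᵀ * R = Qmat Xlow Xsafe γ lam)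
    (U : Matrix (Fin d) (Fin d) ℝ) (hU : Uᵀ * U = 1)
    (V : Matrix (Fin m) (Fin m) ℝ) (hV : Vᵀ * V = 1)
    (S : Matrix (Fin d) (Fin m) ℝ)
    (hSdiag : ∀ (i : Fin d) (j : Fin m), (i : ℕ) ≠ (j : ℕ) → S i j = 0)
    (hSnonneg : ∀ (i : Fin d) (j : Fin m), (i : ℕ) = (j : ℕ) → 0 ≤ S i j)
    (hSmono : ∀ (i : Fin d) (j : Fin m) (i' : Fin d) (j' : Fin m),
      (i : ℕ) = (j : ℕ) → (i' : ℕ) = (j' : ℕ) → (i : ℕ) ≤ (i' : ℕ) → S i' j' ≤ S i j)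
    (hSVD : R * Mmat Xlow Xsafe D γ lam = U * S * Vᵀ)
    (Sr : Matrix (Fin d) (Fin m) ℝ)
    (hSr : ∀ (i : Fin d) (j : Fin m), Sr i j = if (i : ℕ) < r then S i j else 0) :
    (R⁻¹ * (U * Sr * Vᵀ)).rank ≤ r ∧
      ∀ Δ : Matrix (Fin d) (Fin m) ℝ, Δ.rank ≤ r →
        J Xlow Xsafe D γ lam (R⁻¹ * (U * Sr * Vᵀ)) ≤ J Xlow Xsafe D γ lam Δ := by
  have hRdet : IsUnit R.det := (isUnit_iff_isUnit_det R).mp hR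
  have hQM := Qmat_mul_Mmat Xlow Xsafe D γ lam <| by
    rw [← hRQ, det_mul, det_transpose]; exact hRdet.mul hRdet
  refine ⟨?_, fun Δ hΔ => ?_⟩
  · calc (R⁻¹ * (U * Sr * Vᵀ)).rank ≤ Sr.rank :=
          (rank_mul_le_right _ _).trans ((rank_mul_le_left _ _).trans (rank_mul_le_right _ _))
      _ ≤ r := rank_le_of_forall_le_eq_zero fun i j hi => by rw [hSr, if_neg (not_lt.2 hi)]
  set Z := Uᵀ * (R * Δ) * V
  have hZ : Z.rank ≤ r :=
    (rank_mul_le_left _ _).trans ((rank_mul_le_right _ _).trans ((rank_mul_le_right _ _).trans hΔ))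
  have hRΔ : R * Δ = U * Z * Vᵀ := by
    simp only [Z, ← Matrix.mul_assoc, mul_eq_one_comm.mp hU, Matrix.one_mul]
    rw [Matrix.mul_assoc, mul_eq_one_comm.mp hV, Matrix.mul_one]
  rw [J_eq_trace_sub_add _ _ _ _ _ hRQ hQM, J_eq_trace_sub_add _ _ _ _ _ hRQ hQM,
    mul_nonsing_inv_cancel_left _ _ hRdet, hRΔ, hSVD, ← Matrix.sub_mul, ← Matrix.mul_sub,
    ← Matrix.sub_mul, ← Matrix.mul_sub, add_le_add_iff_right,
    trace_transpose_mul_self_mul_mul_transpose hU hV,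
    trace_transpose_mul_self_mul_mul_transpose hU hV]
  exact trace_sub_truncation_le hSdiag hSnonneg hSmono hSr hZ

/-- Theorem 1, Low-Rank Safety Alignment. Given an SVD
`R M = U S Vᵀ` with `U, V` orthogonal and `Σ` rectangular-diagonal with
nonincreasing nonnegative diagonal entries, and `Sr` obtained from `Σ` by
zeroing the diagonal entries beyond the first `r`, the matrix
`Δ* = R⁻¹ U Sr Vᵀ` has rank at most `r` and minimizes `J` over the
matrices of rank at most `r`. -/
theorem stmt_7 {Nh Ns d m : ℕ}
    (Xlow : Matrix (Fin Nh) (Fin d) ℝ) (Xsafe : Matrix (Fin Ns) (Fin d) ℝ)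
    (D : Matrix (Fin Nh) (Fin m) ℝ) (γ lam : ℝ) (hγ : 0 ≤ γ) (hlam : 0 < lam)
    (r : ℕ) (R : Matrix (Fin d) (Fin d) ℝ) (hR : IsUnit R)
    (hRQ : Rᵀ * R = Qmat Xlow Xsafe γ lam)
    (U : Matrix (Fin d) (Fin d) ℝ) (hU : Uᵀ * U = 1)
    (V : Matrix (Fin m) (Fin m) ℝ) (hV : Vᵀ * V = 1)
    (S : Matrix (Fin d) (Fin m) ℝ)
    (hSdiag : ∀ (i : Fin d) (j : Fin m), (i : ℕ) ≠ (j : ℕ) → S i j = 0)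
    (hSnonneg : ∀ (i : Fin d) (j : Fin m), (i : ℕ) = (j : ℕ) → 0 ≤ S i j)
    (hSmono : ∀ (i : Fin d) (j : Fin m) (i' : Fin d) (j' : Fin m),
      (i : ℕ) = (j : ℕ) → (i' : ℕ) = (j' : ℕ) → (i : ℕ) ≤ (i' : ℕ) → S i' j' ≤ S i j)
    (hSVD : R * Mmat Xlow Xsafe D γ lam = U * S * Vᵀ)
    (Sr : Matrix (Fin d) (Fin m) ℝ)
    (hSr : ∀ (i : Fin d) (j : Fin m), Sr i j = if (i : ℕ) < r then S i j else 0) :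
    (R⁻¹ * (U * Sr * Vᵀ)).rank ≤ r ∧
      ∀ Δ : Matrix (Fin d) (Fin m) ℝ, Δ.rank ≤ r →
        J Xlow Xsafe D γ lam (R⁻¹ * (U * Sr * Vᵀ)) ≤ J Xlow Xsafe D γ lam Δ :=
  stmt_7_general Xlow Xsafe D γ lam r R hR hRQ U hU V hV S hSdiag hSnonneg hSmono hSVD Sr hSr
end
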